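/- arXiv:1404.5244 — 2 statements merged into one kernel-verified Lean document; each statement's English description precedes it below -/
import Mathlib

section
/- Every non-leading subpalindrome occurrence is a suffix of a leading cubic subpalindrome occurrence with the same right end: if w[i..j] is a nonempty subpalindrome of w that is not leading in w, then there exists i' < i such that w[i'..j] is a subpalindrome of w that is leading in w and cubic. -/
/-!
A witness of non-leadingness is a longer palindrome ending at `j` with a period `p₀`,
`2 p₀ ≤ |w[i..j]|`; let `p` be its minimal period and `w[i'..j]` the longest palindrome ending
at `j` with period `p`, so `p` is also the minimal period of `w[i'..j]`. A palindrome with a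
palindromic suffix has the difference of their lengths as a period, so by Fine–Wilf `p` divides
`i - i'`, which makes `w[i'..j]` cubic. If a longer palindrome `w[t..j]` had a period `q` with
`2q ≤ |w[i'..j]|`, Fine–Wilf for `q` and `i' - t` would give it a period `g ≤ q`, and the period
`p` of the long suffix `w[i'..j]` would propagate along `g` to all of `w[t..j]`, contradicting the
choice of `i'`.
-/

/-- `w = z^k`: concatenation of `k` copies of `z`. -/
def listPow {α : Type*} (z : List α) (k : ℕ) : List α := (List.replicate k z).flatten

/-- A positive integer `p` is a period of `w` if `w[i] = w[i+p]` whenever both positions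
are inside `w` (0-indexed). -/
def HasPeriod {α : Type*} (w : List α) (p : ℕ) : Prop :=
  0 < p ∧ ∀ i : ℕ, i + p < w.length → w[i]? = w[i + p]?

/-- The substring `w[i..j]` (1-indexed, `w[i..i-1] = ε`). -/
def substr {α : Type*} (w : List α) (i j : ℕ) : List α := (w.drop (i - 1)).take (j + 1 - i)

def SubPalAt {α : Type*} (w : List α) (i j : ℕ) : Prop :=
  1 ≤ i ∧ i ≤ j + 1 ∧ j ≤ w.length ∧ (substr w i j).reverse = substr w i j

def LeadingAt {α : Type*} (w : List α) (i j : ℕ) : Prop :=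
  ∀ i2 p : ℕ, 1 ≤ i2 → i2 < i → (substr w i2 j).reverse = substr w i2 j →
    HasPeriod (substr w i2 j) p → 2 * p > j + 1 - i

def CubicStr {α : Type*} (s : List α) : Prop :=
  s ≠ [] ∧ ∃ p, HasPeriod s p ∧ (∀ q, HasPeriod s q → p ≤ q) ∧ 3 * p ≤ s.length

section Periodicity

variable {α : Type*} {s : List α} {a b k p q : ℕ}

theorem HasPeriod.drop (h : HasPeriod s p) (k : ℕ) : HasPeriod (s.drop k) p := by
  refine ⟨h.1, fun m hm => ?_⟩
  rw [List.length_drop] at hm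
  simpa only [List.getElem?_drop, Nat.add_assoc] using h.2 (k + m) (by omega)

theorem hasPeriod_of_drop_palindrome (hk : 0 < k) (hs : s.reverse = s)
    (ht : (s.drop k).reverse = s.drop k) : HasPeriod s k := by
  refine ⟨hk, fun m hm => ?_⟩
  set n := s.length
  have hfirst : s[m]? = s[n - 1 - m]? := by
    conv_lhs => rw [← hs]
    rw [List.getElem?_reverse (by omega)]
  have hsecond : (s.drop k)[n - 1 - m - k]? =
      (s.drop k)[(s.drop k).length - 1 - (n - 1 - m - k)]? := by
    conv_lhs => rw [← ht]
    rw [List.getElem?_reverse (by rw [List.length_drop]; omega)]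
  rw [List.getElem?_drop, List.getElem?_drop, List.length_drop,
    show k + (n - 1 - m - k) = n - 1 - m by omega,
    show k + (n - k - 1 - (n - 1 - m - k)) = m + k by omega] at hsecond
  rw [hfirst, hsecond]

theorem HasPeriod.sub (ha : HasPeriod s a) (hb : HasPeriod s b) (hba : b < a)
    (hab : a + b ≤ s.length) : HasPeriod s (a - b) := by
  refine ⟨by omega, fun m hm => ?_⟩
  by_cases hc : m + a < s.length
  · have h1 := ha.2 m hc
    have h2 := hb.2 (m + a - b) (by omega)
    rw [show m + a - b + b = m + a by omega] at h2
    rw [h1, ← h2, show m + a - b = m + (a - b) by omega]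
  · have h1 := hb.2 (m - b) (by omega)
    have h2 := ha.2 (m - b) (by omega)
    rw [show m - b + b = m by omega] at h1
    rw [show m - b + a = m + (a - b) by omega] at h2
    rw [← h1, h2]

/-- Weak Fine–Wilf theorem. -/
theorem HasPeriod.gcd (ha : HasPeriod s a) (hb : HasPeriod s b) (hab : a + b ≤ s.length) :
    HasPeriod s (Nat.gcd a b) := by
  induction hn : a + b using Nat.strong_induction_on generalizing a b with
  | _ n ih =>
    have := ha.1
    have := hb.1
    rcases lt_trichotomy a b with h | rfl | h
    · have key := ih (a + (b - a)) (by omega) ha (hb.sub ha h (by omega)) (by omega) rfl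
      rwa [← Nat.gcd_sub_self_right h.le]
    · rwa [Nat.gcd_self]
    · have key := ih (a - b + b) (by omega) (ha.sub hb h (by omega)) hb (by omega) rfl
      rwa [← Nat.gcd_sub_self_left h.le]

theorem HasPeriod.of_drop (hb : HasPeriod s b) (ha : HasPeriod (s.drop k) a)
    (hab : a + b ≤ s.length - k) : HasPeriod s a := by
  refine ⟨ha.1, fun m hm => ?_⟩
  induction hd : k - m using Nat.strong_induction_on generalizing m with
  | _ d ih =>
    by_cases hkm : k ≤ m
    · have := ha.2 (m - k) (by rw [List.length_drop]; omega)
      rwa [List.getElem?_drop, List.getElem?_drop, show k + (m - k) = m by omega,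
        show k + (m - k + a) = m + a by omega] at this
    · have := hb.1
      have := ha.1
      rw [hb.2 m (by omega), ih (k - (m + b)) (by omega) (m + b) (by omega) rfl,
        show m + b + a = m + a + b by omega, ← hb.2 (m + a) (by omega)]

theorem HasPeriod.dvd_of_minimal (hp : HasPeriod s p) (hmin : ∀ r, HasPeriod s r → p ≤ r)
    (hq : HasPeriod s q) (hpq : p + q ≤ s.length) : p ∣ q := by
  have hgcd : Nat.gcd p q = p :=
    le_antisymm (Nat.le_of_dvd hp.1 (Nat.gcd_dvd_left p q)) (hmin _ (hp.gcd hq hpq))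
  exact hgcd ▸ Nat.gcd_dvd_right p q

theorem cubicStr_of_drop_palindrome (hs : s.reverse = s) (hp : HasPeriod s p)
    (hmin : ∀ r, HasPeriod s r → p ≤ r) (hk : 0 < k) (ht : (s.drop k).reverse = s.drop k)
    (h2p : 2 * p ≤ s.length - k) : CubicStr s := by
  have := hp.1
  have hpk : p ≤ k :=
    Nat.le_of_dvd hk (hp.dvd_of_minimal hmin (hasPeriod_of_drop_palindrome hk hs ht) (by omega))
  exact ⟨List.ne_nil_of_length_pos (by omega), p, hp, hmin, by omega⟩

theorem hasPeriod_of_drop_palindrome_of_le (hs : s.reverse = s) (hq : HasPeriod s q)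
    (hk : 0 < k) (ht : (s.drop k).reverse = s.drop k) (hp : HasPeriod (s.drop k) p)
    (hpq : p ≤ q) (h2q : 2 * q ≤ s.length - k) : HasPeriod s p := by
  have := hq.1
  have hgcd := hq.gcd (hasPeriod_of_drop_palindrome hk hs ht) (by omega)
  have := Nat.le_of_dvd hq.1 (Nat.gcd_dvd_left q k)
  exact hgcd.of_drop hp (by omega)

end Periodicity

section Occurrences

variable {α : Type*} {w : List α} {i i' j : ℕ}

theorem substr_length (hi : 1 ≤ i) (hj : j ≤ w.length) : (substr w i j).length = j + 1 - i := by
  simp only [substr, List.length_take, List.length_drop]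
  omega

theorem substr_drop (hi : 1 ≤ i) (hii' : i ≤ i') :
    (substr w i j).drop (i' - i) = substr w i' j := by
  simp only [substr]
  rw [List.drop_take, List.drop_drop, show i - 1 + (i' - i) = i' - 1 by omega,
    show j + 1 - i - (i' - i) = j + 1 - i' by omega]

theorem leadingAt_of_leftmost {p : ℕ} (hj : j ≤ w.length)
    (hpal : (substr w i j).reverse = substr w i j) (hp : HasPeriod (substr w i j) p)
    (hmin : ∀ q, HasPeriod (substr w i j) q → p ≤ q)
    (hleft : ∀ t < i,
      ¬ (1 ≤ t ∧ (substr w t j).reverse = substr w t j ∧ HasPeriod (substr w t j) p)) :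
    LeadingAt w i j := by
  intro t q ht hti htpal hq
  by_contra! h2q
  have hdrop : (substr w t j).drop (i - t) = substr w i j := substr_drop ht hti.le
  have hpq : p ≤ q := hmin q (hdrop ▸ hq.drop (i - t))
  refine hleft t hti ⟨ht, htpal,
    hasPeriod_of_drop_palindrome_of_le htpal hq (by omega) (hdrop ▸ hpal) (hdrop ▸ hp) hpq ?_⟩
  rw [substr_length ht hj]
  omega

end Occurrences

theorem stmt_13_general {α : Type*} (w : List α) (i j : ℕ)
    (hsub : SubPalAt w i j) (hnotlead : ¬ LeadingAt w i j) :
    ∃ i', 1 ≤ i' ∧ i' < i ∧ SubPalAt w i' j ∧ LeadingAt w i' j ∧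
      CubicStr (substr w i' j) := by
  classical
  obtain ⟨-, hij, hj, hpal⟩ := hsub
  simp only [LeadingAt, not_forall, not_lt] at hnotlead
  obtain ⟨i₀, p₀, hi₀, hi₀i, hpal₀, hp₀, h2p₀⟩ := hnotlead
  have hper : ∃ p, HasPeriod (substr w i₀ j) p := ⟨p₀, hp₀⟩
  set p := Nat.find hper
  have hleft : ∃ t, 1 ≤ t ∧ (substr w t j).reverse = substr w t j ∧ HasPeriod (substr w t j) p :=
    ⟨i₀, hi₀, hpal₀, Nat.find_spec hper⟩
  set i' := Nat.find hleft
  obtain ⟨hi', hpal', hp'⟩ := Nat.find_spec hleft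
  have hi'i₀ : i' ≤ i₀ := Nat.find_min' hleft ⟨hi₀, hpal₀, Nat.find_spec hper⟩
  have hmin : ∀ q, HasPeriod (substr w i' j) q → p ≤ q := fun q hq =>
    Nat.find_min' hper (substr_drop hi' hi'i₀ ▸ hq.drop (i₀ - i'))
  have hpp₀ : p ≤ p₀ := Nat.find_min' hper hp₀
  have hdrop : (substr w i' j).drop (i - i') = substr w i j := substr_drop hi' (by omega)
  have hlead : LeadingAt w i' j :=
    leadingAt_of_leftmost hj hpal' hp' hmin fun _ => Nat.find_min hleft
  have hcubic : CubicStr (substr w i' j) := by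
    refine cubicStr_of_drop_palindrome hpal' hp' hmin (k := i - i') (by omega) (hdrop ▸ hpal) ?_
    rw [substr_length hi' hj]
    omega
  exact ⟨i', hi', by omega, ⟨hi', by omega, hj, hpal'⟩, hlead, hcubic⟩

/-- Every nonempty non-leading subpalindrome occurrence of `w` is a suffix of a leading
cubic subpalindrome occurrence with the same right end. -/
theorem stmt_13 {α : Type*} (w : List α) (i j : ℕ) (hne : i ≤ j)
    (hsub : SubPalAt w i j) (hnotlead : ¬ LeadingAt w i j) :
    ∃ i', 1 ≤ i' ∧ i' < i ∧ SubPalAt w i' j ∧ LeadingAt w i' j ∧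
      CubicStr (substr w i' j) :=
  stmt_13_general w i j hsub hnotlead
end

section
/- Let s = w[i+1..n] (where n = |w|) be a suffix-palindrome of w whose occurrence is leading in w, suppose s is cubic, and let s = (uv)^k u be its canonical decomposition (so k ≥ 3). Then the occurrence w[i+1..n−|uv|], whose content is (uv)^(k−1) u, is a subpalindrome of w that is leading in w. -/
/-!
Write `p = |uv|`, `s = w[i+1..n]` and `s' = (uv)^(k-1) u`, which is both `s` minus its first `p`
letters and `s` minus its last `p` letters. Suppose a palindrome `t = w[a+1..n-p]` with
`a < i` has a period `q` with `2q ≤ |s'|`, and let `W = w[a+1..n]`, `d = i - a`. As `s'` is a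
palindromic suffix of the palindrome `t`, `t` has period `d`, hence period `gcd q d` by
Fine–Wilf. This period passes to `s'`, where Fine–Wilf with `p` and the minimality of `p` for
`s` give `p ∣ gcd q d`. So `W` has period `p` and `p ∣ d`, hence `W = (uv)^(m+k) u` is a
palindrome with period `p`; as `s` is leading, `2p > |s| ≥ 3p`, a contradiction.
-/

section

variable {α : Type*}

theorem hasPeriod_iff {w : List α} {p : ℕ} : HasPeriod w p ↔ 0 < p ∧ w.HasPeriod p := by
  rw [HasPeriod, List.hasPeriod_iff_getElem?]
  exact and_congr_right fun _ => forall_congr' fun j =>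
    ⟨fun h hj => h (by omega), fun h hj => h (by omega)⟩

theorem substr_succ_length_sub (w : List α) (a p : ℕ) :
    substr w (a + 1) (w.length - p) = (w.drop a).take ((w.drop a).length - p) := by
  rw [substr, List.length_drop]
  congr 1
  omega

theorem substr_succ_length (w : List α) (a : ℕ) : substr w (a + 1) w.length = w.drop a := by
  simpa only [Nat.sub_zero, List.take_length] using substr_succ_length_sub w a 0

theorem listPow_succ (z : List α) (k : ℕ) : listPow z (k + 1) = z ++ listPow z k := by
  simp [listPow, List.replicate_succ]

theorem listPow_succ' (z : List α) (k : ℕ) : listPow z (k + 1) = listPow z k ++ z := by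
  simp [listPow, List.replicate_succ']

theorem length_listPow (z : List α) (k : ℕ) : (listPow z k).length = k * z.length := by
  simp [listPow]

theorem length_listPow_append (z u : List α) (k : ℕ) :
    (listPow z k ++ u).length = k * z.length + u.length := by
  rw [List.length_append, length_listPow]

theorem reverse_listPow (z : List α) (k : ℕ) : (listPow z k).reverse = listPow z.reverse k := by
  induction k with
  | zero => rfl
  | succ k ih => rw [listPow_succ, listPow_succ', List.reverse_append, ih]

theorem append_listPow_append_comm (u v : List α) (k : ℕ) :
    u ++ listPow (v ++ u) k = listPow (u ++ v) k ++ u := by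
  induction k with
  | zero => simp [listPow]
  | succ k ih => simp only [listPow_succ', ← List.append_assoc, ih]

theorem reverse_listPow_append {u v : List α} (hu : u.reverse = u) (hv : v.reverse = v) (k : ℕ) :
    (listPow (u ++ v) k ++ u).reverse = listPow (u ++ v) k ++ u := by
  rw [List.reverse_append, reverse_listPow, List.reverse_append, hu, hv,
    append_listPow_append_comm]

theorem drop_listPow_succ_append (z u : List α) (k : ℕ) :
    (listPow z (k + 1) ++ u).drop z.length = listPow z k ++ u := by
  rw [listPow_succ, List.append_assoc, List.drop_left]

namespace List

theorem hasPeriod_iff_drop_prefix {w : List α} {p : ℕ} : w.HasPeriod p ↔ w.drop p <+: w := by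
  refine ⟨HasPeriod.drop_prefix p, fun h => ?_⟩
  have := (prefix_append_right_inj (w.take p)).2 h
  rwa [take_append_drop] at this

theorem HasPeriod.drop_eq_take {w : List α} {p : ℕ} (h : w.HasPeriod p) :
    w.drop p = w.take (w.length - p) := by
  simpa using prefix_iff_eq_take.1 (h.drop_prefix p)

theorem HasPeriod.drop {w : List α} {p : ℕ} (h : w.HasPeriod p) (n : ℕ) :
    (w.drop n).HasPeriod p :=
  h.infix (drop_suffix n w).isInfix

theorem hasPeriod_of_reverse_eq {t : List α} {d : ℕ} (ht : t.reverse = t)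
    (hs : (t.drop d).reverse = t.drop d) : t.HasPeriod d := by
  rw [hasPeriod_iff_drop_prefix, ← hs, reverse_drop, ht]
  exact take_prefix _ _

theorem HasPeriod.of_drop {s : List α} {p g : ℕ} (hs : s.HasPeriod p)
    (hg : (s.drop p).HasPeriod g) (hdvd : g ∣ p) (hlen : 2 * p ≤ s.length) : s.HasPeriod g := by
  have htake : (s.drop p).take p = s.take p := by
    rw [hs.drop_eq_take, take_take, min_eq_left (by omega)]
  simpa [htake] using hg.take_append g p (s.drop p) hdvd (by simp; omega)

theorem HasPeriod.dvd_of_drop {s : List α} {p G : ℕ} (hs : s.HasPeriod p) (hp : 0 < p)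
    (hmin : ∀ q, 0 < q → s.HasPeriod q → p ≤ q) (hG : (s.drop p).HasPeriod G) (hG0 : 0 < G)
    (hlen : 2 * p + G ≤ s.length) : p ∣ G := by
  have hgcd : (s.drop p).HasPeriod (p.gcd G) :=
    (hs.drop p).gcd hG (by simp only [length_drop]; omega)
  have hle := hmin _ (Nat.gcd_pos_of_pos_right p hG0)
    (hs.of_drop hgcd (Nat.gcd_dvd_left p G) (by omega))
  exact Nat.gcd_eq_left_iff_dvd.1 (le_antisymm (Nat.gcd_le_left G hp) hle)

/-- Positions before `d` are moved into the suffix by shifts of `G` inside the prefix. -/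
theorem hasPeriod_of_take_of_drop {W : List α} {p G d : ℕ} (hG : 0 < G)
    (ht : (W.take (W.length - p)).HasPeriod G) (hs : (W.drop d).HasPeriod p)
    (hlen : d + G + 2 * p ≤ W.length) : W.HasPeriod p := by
  rw [hasPeriod_iff_getElem?] at ht hs ⊢
  have shiftG : ∀ j, j + G + p < W.length → W[j]? = W[j + G]? := fun j hj => by
    have := ht j (by simp; omega)
    rwa [getElem?_take, getElem?_take, if_pos (by omega), if_pos (by omega)] at this
  have shiftp : ∀ j, d ≤ j → j + p < W.length → W[j]? = W[j + p]? := fun j hdj hj => by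
    simpa [getElem?_drop, show d + (j - d) = j by omega, show d + (j - d + p) = j + p by omega]
      using hs (j - d) (by simp; omega)
  have key : ∀ n j, d ≤ j + n * G → j + p < W.length → W[j]? = W[j + p]? := by
    intro n
    induction n with
    | zero => exact fun j hj => shiftp j (by simpa using hj)
    | succ n ih =>
      intro j hj hjp
      by_cases hdj : d ≤ j
      · exact shiftp j hdj hjp
      rw [shiftG j (by omega), shiftG (j + p) (by omega), Nat.add_right_comm j p G]
      exact ih (j + G) (by rw [Nat.succ_mul] at hj; omega) (by omega)
  exact fun j hj => key d j (by nlinarith) (by omega)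

theorem hasPeriod_and_dvd_of_reverse_eq {W : List α} {p q d : ℕ} (hp : 0 < p) (hq : 0 < q)
    (hs : (W.drop d).HasPeriod p) (hmin : ∀ r, 0 < r → (W.drop d).HasPeriod r → p ≤ r)
    (ht : (W.take (W.length - p)).reverse = W.take (W.length - p))
    (hs' : ((W.drop d).drop p).reverse = (W.drop d).drop p)
    (htq : (W.take (W.length - p)).HasPeriod q)
    (hq_len : 2 * q + p + d ≤ W.length) (hp_len : 3 * p + d ≤ W.length) :
    W.HasPeriod p ∧ p ∣ d := by
  set t := W.take (W.length - p)
  have hts : t.drop d = (W.drop d).drop p := by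
    rw [hs.drop_eq_take, drop_take, length_drop]
    congr 1
    omega
  have htd : t.HasPeriod d := hasPeriod_of_reverse_eq ht (hts ▸ hs')
  have hG0 : 0 < q.gcd d := Nat.gcd_pos_of_pos_left d hq
  have hGq : q.gcd d ≤ q := Nat.gcd_le_left d hq
  have htG : t.HasPeriod (q.gcd d) := htq.gcd htd (by simp [t]; omega)
  have hpG : p ∣ q.gcd d := hs.dvd_of_drop hp hmin (hts ▸ htG.drop d) hG0 (by simp; omega)
  exact ⟨hasPeriod_of_take_of_drop hG0 htG hs (by omega), hpG.trans (Nat.gcd_dvd_right q d)⟩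

end List

theorem eq_listPow_append_of_hasPeriod {z u W : List α} {k : ℕ} (m : ℕ)
    (hW : W.HasPeriod z.length) (h : W.drop (m * z.length) = listPow z (k + 1) ++ u) :
    W = listPow z (m + k + 1) ++ u := by
  induction m generalizing W with
  | zero => simpa using h
  | succ m ih =>
    have htail : W.drop z.length = listPow z (m + k + 1) ++ u := by
      refine ih (hW.drop _) ?_
      rw [List.drop_drop, ← h, Nat.succ_mul, Nat.add_comm]
    have hhead : W.take z.length = z := by
      have hlen := congrArg List.length htail
      simp only [List.length_drop, List.length_append, length_listPow] at hlen
      calc W.take z.length = (W.take (W.length - z.length)).take z.length := by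
            rw [List.take_take, min_eq_left (by rw [Nat.add_mul] at hlen; omega)]
        _ = z := by
            rw [← hW.drop_eq_take, htail, listPow_succ, List.append_assoc, List.take_left]
    rw [← List.take_append_drop z.length W, hhead, htail, ← List.append_assoc, ← listPow_succ]
    rw [Nat.add_right_comm m 1 k]

theorem leadingAt_of_eq_listPow {w u v : List α} {i k : ℕ} (hlead : LeadingAt w (i + 1) w.length)
    (hu : u.reverse = u) (hv : v.reverse = v) (hk : 2 ≤ k) (hp : 0 < (u ++ v).length)
    (hper : (w.drop i).HasPeriod (u ++ v).length)
    (hmin : ∀ q, 0 < q → (w.drop i).HasPeriod q → (u ++ v).length ≤ q)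
    (hdec : w.drop i = listPow (u ++ v) (k + 1) ++ u) :
    LeadingAt w (i + 1) (w.length - (u ++ v).length) := by
  set z := u ++ v
  have hs_len : 3 * z.length ≤ w.length - i := by
    rw [← List.length_drop, hdec, length_listPow_append]
    nlinarith
  intro i2 q hi2 hi2i hpal hq
  obtain ⟨a, rfl⟩ : ∃ a, i2 = a + 1 := ⟨i2 - 1, by omega⟩
  rw [substr_succ_length_sub] at hpal hq
  obtain ⟨hq0, hq⟩ := hasPeriod_iff.1 hq
  by_contra hshort
  have hWd : (w.drop a).drop (i - a) = w.drop i := by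
    rw [List.drop_drop]
    congr 1
    omega
  obtain ⟨hWp, m, hm⟩ := List.hasPeriod_and_dvd_of_reverse_eq (W := w.drop a) (d := i - a)
    hp hq0 (by rwa [hWd]) (by rwa [hWd]) hpal
    (by rw [hWd, hdec, drop_listPow_succ_append]; exact reverse_listPow_append hu hv k) hq
    (by simp only [List.length_drop]; omega) (by simp only [List.length_drop]; omega)
  have hW : w.drop a = listPow z (m + k + 1) ++ u :=
    eq_listPow_append_of_hasPeriod m hWp (by rw [mul_comm, ← hm, hWd, hdec])
  have := hlead (a + 1) z.length (by omega) hi2i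
    (by rw [substr_succ_length, hW]; exact reverse_listPow_append hu hv _)
    (hasPeriod_iff.2 ⟨hp, by rwa [substr_succ_length]⟩)
  omega

end

theorem stmt_14_general {α : Type*} (w u v : List α) (i k : ℕ)
    (hlead : LeadingAt w (i + 1) w.length)
    (hu : u.reverse = u) (hv : v.reverse = v)
    (hper : HasPeriod (substr w (i + 1) w.length) (u.length + v.length))
    (hmin : ∀ q, HasPeriod (substr w (i + 1) w.length) q → u.length + v.length ≤ q)
    (hk : 3 ≤ k)
    (hdec : substr w (i + 1) w.length = listPow (u ++ v) k ++ u) :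
    substr w (i + 1) (w.length - (u.length + v.length)) = listPow (u ++ v) (k - 1) ++ u ∧
    SubPalAt w (i + 1) (w.length - (u.length + v.length)) ∧
    LeadingAt w (i + 1) (w.length - (u.length + v.length)) := by
  obtain ⟨k, rfl⟩ : ∃ k', k = k' + 1 := ⟨k - 1, by omega⟩
  rw [substr_succ_length] at hper hmin hdec
  rw [← List.length_append] at hper hmin ⊢
  obtain ⟨hp, hper⟩ := hasPeriod_iff.1 hper
  have hs' : substr w (i + 1) (w.length - (u ++ v).length) = listPow (u ++ v) k ++ u := by
    rw [substr_succ_length_sub, ← hper.drop_eq_take, hdec, drop_listPow_succ_append]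
  have hi : i + (u ++ v).length ≤ w.length := by
    have := congrArg List.length hdec
    rw [List.length_drop, length_listPow_append] at this
    have := Nat.le_mul_of_pos_left (u ++ v).length (show 0 < k + 1 by omega)
    omega
  refine ⟨hs', ⟨by omega, by omega, by omega, hs' ▸ reverse_listPow_append hu hv k⟩,
    leadingAt_of_eq_listPow hlead hu hv (by omega) hp hper
      (fun q hq h => hmin q (hasPeriod_iff.2 ⟨hq, h⟩)) hdec⟩

/-- If `s = w[i+1..n]` (`n = |w|`) is a leading cubic suffix-palindrome of `w` with
canonical decomposition `(uv)^k u` (`k ≥ 3`), then the occurrence `w[i+1..n-|uv|]`,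
whose content is `(uv)^(k-1) u`, is a subpalindrome of `w` that is leading in `w`. -/
theorem stmt_14 {α : Type*} (w u v : List α) (i k : ℕ)
    (hsub : SubPalAt w (i + 1) w.length) (hlead : LeadingAt w (i + 1) w.length)
    (hu : u.reverse = u) (hv : v.reverse = v) (hvne : v ≠ [])
    (hper : HasPeriod (substr w (i + 1) w.length) (u.length + v.length))
    (hmin : ∀ q, HasPeriod (substr w (i + 1) w.length) q → u.length + v.length ≤ q)
    (hcubic : 3 * (u.length + v.length) ≤ (substr w (i + 1) w.length).length)
    (hk : 3 ≤ k)
    (hdec : substr w (i + 1) w.length = listPow (u ++ v) k ++ u) :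
    substr w (i + 1) (w.length - (u.length + v.length)) = listPow (u ++ v) (k - 1) ++ u ∧
    SubPalAt w (i + 1) (w.length - (u.length + v.length)) ∧
    LeadingAt w (i + 1) (w.length - (u.length + v.length)) :=
  stmt_14_general w u v i k hlead hu hv hper hmin hk hdec
end
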